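/- arXiv:1010.3455 — 4 statements merged into one kernel-verified Lean document; each statement's English description precedes it below -/
import Mathlib

section
/- Let M be a finite monoid. Then M is J-trivial (i.e., for all x, y ∈ M, M x M = M y M implies x = y) if and only if there exists a partial order ≤ on M such that x·y ≤ x and x·y ≤ y for all x, y ∈ M. Moreover, for any such partial order ≤ and any x, y ∈ M, x ≤_J y implies x ≤ y. -/
/-- The `J`-preorder on a monoid: `x ≤_J y` iff `x = u * y * v` for some `u, v`. -/
def leJ {M : Type*} [Monoid M] (x y : M) : Prop := ∃ u v : M, x = u * y * v

/-- A monoid is `J`-trivial if `M x M = M y M` implies `x = y`. -/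
def JTrivial (M : Type*) [Monoid M] : Prop :=
  ∀ x y : M, {z : M | ∃ u v : M, z = u * x * v} = {z : M | ∃ u v : M, z = u * y * v} → x = y

/-! `≤_J` is a preorder whose associated equivalence is equality exactly when `M` is `J`-trivial,
and every product lies `J`-below both factors; so in the `J`-trivial case `≤_J` itself is a
partial order of the required kind. Conversely, writing `x = u * (y * v)` gives
`x ≤ y * v ≤ y` in any such order, whose antisymmetry then forces `J`-triviality. -/

section Monoid

variable {M : Type*} [Monoid M]

theorem leJ_refl (x : M) : leJ x x := ⟨1, 1, by simp⟩

theorem leJ_trans {x y z : M} (hxy : leJ x y) (hyz : leJ y z) : leJ x z := by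
  obtain ⟨u, v, rfl⟩ := hxy
  obtain ⟨a, b, rfl⟩ := hyz
  exact ⟨u * a, b * v, by simp only [mul_assoc]⟩

theorem mul_leJ_left (x y : M) : leJ (x * y) x := ⟨1, y, by simp⟩

theorem mul_leJ_right (x y : M) : leJ (x * y) y := ⟨x, 1, by simp⟩

theorem setOf_leJ_subset_iff {x y : M} : {z | leJ z x} ⊆ {z | leJ z y} ↔ leJ x y :=
  ⟨fun h => h (leJ_refl x), fun h _ hz => leJ_trans hz h⟩

theorem jTrivial_iff_leJ_antisymm :
    JTrivial M ↔ ∀ x y : M, leJ x y → leJ y x → x = y := by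
  change (∀ x y : M, {z | leJ z x} = {z | leJ z y} → x = y) ↔ _
  simp only [Set.Subset.antisymm_iff, setOf_leJ_subset_iff, and_imp]

@[reducible]
def JTrivial.partialOrder (h : JTrivial M) : PartialOrder M where
  le := leJ
  le_refl := leJ_refl
  le_trans _ _ _ := leJ_trans
  le_antisymm := jTrivial_iff_leJ_antisymm.1 h

theorem le_of_leJ [Preorder M] (hmul : ∀ x y : M, x * y ≤ x ∧ x * y ≤ y) {x y : M}
    (hxy : leJ x y) : x ≤ y := by
  obtain ⟨u, v, rfl⟩ := hxy
  calc u * y * v = u * (y * v) := mul_assoc u y v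
    _ ≤ y * v := (hmul u (y * v)).2
    _ ≤ y := (hmul y v).1

end Monoid

theorem jtrivial_iff_exists_leftRightOrder_general {M : Type*} [Monoid M] :
    (JTrivial M ↔
      ∃ r : PartialOrder M, ∀ x y : M, (letI := r; x * y ≤ x) ∧ (letI := r; x * y ≤ y)) ∧
    (∀ r : PartialOrder M,
      (∀ x y : M, (letI := r; x * y ≤ x) ∧ (letI := r; x * y ≤ y)) →
      ∀ x y : M, leJ x y → (letI := r; x ≤ y)) := by
  refine ⟨⟨fun hJ => ⟨hJ.partialOrder, fun x y => ⟨mul_leJ_left x y, mul_leJ_right x y⟩⟩, ?_⟩,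
    fun r hmul _ _ => letI := r; le_of_leJ hmul⟩
  rintro ⟨r, hmul⟩
  let _ := r
  exact jTrivial_iff_leJ_antisymm.2 fun x y hxy hyx =>
    le_antisymm (le_of_leJ hmul hxy) (le_of_leJ hmul hyx)

/-- A finite monoid `M` is `J`-trivial if and only if there exists a partial order `≤` on `M`
such that `x * y ≤ x` and `x * y ≤ y` for all `x, y ∈ M`.  Moreover, for any such partial order
and any `x, y ∈ M`, `x ≤_J y` implies `x ≤ y`. -/
theorem jtrivial_iff_exists_leftRightOrder {M : Type*} [Monoid M] [Fintype M] :
    (JTrivial M ↔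
      ∃ r : PartialOrder M, ∀ x y : M, (letI := r; x * y ≤ x) ∧ (letI := r; x * y ≤ y)) ∧
    (∀ r : PartialOrder M,
      (∀ x y : M, (letI := r; x * y ≤ x) ∧ (letI := r; x * y ≤ y)) →
      ∀ x y : M, leJ x y → (letI := r; x ≤ y)) :=
  jtrivial_iff_exists_leftRightOrder_general
end

section
/- Let K be a field and M a finite J-trivial monoid. For each x ∈ M, the one-dimensional K-vector space S_x with basis vector ε_x carries a right module structure over the monoid algebra MonoidAlgebra K M determined by ε_x · y = ε_x if x·y = x and ε_x · y = 0 otherwise, for y ∈ M. Moreover, every simple right module over MonoidAlgebra K M is isomorphic to S_x for some x ∈ M; in particular, every simple module over MonoidAlgebra K M is one-dimensional over K. -/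
open Classical

/-- `N` realizes the right module `S_x`: it has a nonzero vector `ε` spanning it over `K`
(where `K` acts through the central embedding `K → K[M]`), on which each `y ∈ M` acts by
`ε · y = ε` if `x * y = x` and `ε · y = 0` otherwise.  Right `K[M]`-modules are formalized as
modules over the opposite algebra. -/
def IsSx (K : Type*) {M : Type*} [Field K] [Monoid M] (x : M)
    (N : Type*) [AddCommGroup N] [Module (MonoidAlgebra K M)ᵐᵒᵖ N] : Prop :=
  ∃ ε : N, ε ≠ 0 ∧
    (∀ w : N, ∃ c : K,
      w = MulOpposite.op (algebraMap K (MonoidAlgebra K M) c) • ε) ∧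
    (∀ y : M, MulOpposite.op ((MonoidAlgebra.of K M) y) • ε
        = if x * y = x then ε else 0)

/-! `J`-triviality gives `x(yz) = x ↔ xy = x ∧ xz = x`, so the indicator of the right stabilizer of
`x` is a character of `M`, and `K` with `M` acting through it is `S_x`. Conversely, in a simple
module `N` choose `x` `J`-minimal among the elements of `M` acting nontrivially, and `v` with
`ε := v·x ≠ 0`. Then `ε·y = v·(xy)` is `ε` if `xy = x`, and `0` otherwise because `xy` then lies
strictly `J`-below `x`. So `K ε` is a nonzero submodule, hence all of `N`. -/

namespace JTrivial

variable {M : Type*} [Monoid M]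

theorem leJ_antisymm (hJ : JTrivial M) {a b : M} (hab : leJ a b) (hba : leJ b a) : a = b := by
  have ideal_le {a b : M} (hab : leJ a b) {z : M} :
      (∃ u v : M, z = u * a * v) → ∃ u v : M, z = u * b * v := by
    obtain ⟨p, q, rfl⟩ := hab
    rintro ⟨u, v, rfl⟩
    exact ⟨u * p, q * v, by simp only [mul_assoc]⟩
  exact hJ a b (Set.ext fun _ => ⟨ideal_le hab, ideal_le hba⟩)

theorem exists_leJ_minimal (hJ : JTrivial M) [Finite M] {P : M → Prop} (hP : ∃ x, P x) :
    ∃ x, P x ∧ ∀ y, P y → leJ y x → y = x := by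
  let ltJ : M → M → Prop := fun a b => leJ a b ∧ ¬ leJ b a
  have : IsTrans M ltJ :=
    ⟨fun a b c ⟨⟨u, v, hab⟩, hba⟩ ⟨⟨p, q, hbc⟩, hcb⟩ =>
      ⟨⟨u * p, q * v, by rw [hab, hbc]; simp only [mul_assoc]⟩, fun ⟨r, s, hca⟩ =>
        hcb ⟨r * u, v * s, by rw [hca, hab]; simp only [mul_assoc]⟩⟩⟩
  have : Std.Irrefl ltJ := ⟨fun _ h => h.2 h.1⟩
  obtain ⟨x, hx, hmin⟩ := (Finite.wellFounded_of_trans_of_irrefl ltJ).has_min {y | P y} hP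
  refine ⟨x, hx, fun y hy hyx => hJ.leJ_antisymm hyx ?_⟩
  by_contra hxy
  exact hmin y hy ⟨hyx, hxy⟩

theorem mul_mul_eq_self_iff (hJ : JTrivial M) {x y z : M} :
    x * (y * z) = x ↔ x * y = x ∧ x * z = x := by
  refine ⟨fun h => ?_, fun ⟨hy, hz⟩ => by rw [← mul_assoc, hy, hz]⟩
  have hy : x * y = x := hJ.leJ_antisymm ⟨1, y, by simp⟩ ⟨1, z, by rw [one_mul, mul_assoc, h]⟩
  rw [← mul_assoc, hy] at h
  exact ⟨hy, h⟩

/-- The indicator of the right stabilizer `{y | x * y = x}`, which `J`-triviality makes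
multiplicative. -/
noncomputable def stabilizerChar (R : Type*) [MulZeroOneClass R] (hJ : JTrivial M) (x : M) :
    M →* R where
  toFun y := if x * y = x then 1 else 0
  map_one' := by simp
  map_mul' y z := by
    by_cases hy : x * y = x <;> by_cases hz : x * z = x <;> simp [hJ.mul_mul_eq_self_iff, hy, hz]

end JTrivial

section RightModules

variable {K : Type*} [Field K] {M : Type*} [Monoid M]

open MonoidAlgebra MulOpposite

noncomputable abbrev charModule (χ : M →* K) : Module (MonoidAlgebra K M)ᵐᵒᵖ K :=
  Module.compHom K ((lift K K M χ : MonoidAlgebra K M →+* K).fromOpposite fun _ _ => mul_comm _ _)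

theorem JTrivial.isSx_charModule_stabilizerChar (hJ : JTrivial M) (x : M) :
    letI := charModule (hJ.stabilizerChar K x)
    IsSx K x K := by
  let := charModule (hJ.stabilizerChar K x)
  have smul_eq (a : MonoidAlgebra K M) (c : K) :
      op a • c = lift K K M (hJ.stabilizerChar K x) a * c := rfl
  refine ⟨1, one_ne_zero, fun w => ⟨w, ?_⟩, fun y => ?_⟩
  · rw [smul_eq, AlgHom.commutes, Algebra.algebraMap_self, RingHom.id_apply, mul_one]
  · rw [smul_eq, lift_of, mul_one]
    rfl

variable {N : Type*} [AddCommGroup N] [Module (MonoidAlgebra K M)ᵐᵒᵖ N]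

theorem exists_smul_eq_algebraMap_smul {x : M} {ε : N}
    (hact : ∀ y : M, op (of K M y) • ε = if x * y = x then ε else 0) (a : MonoidAlgebra K M) :
    ∃ c : K, op a • ε = op (algebraMap K (MonoidAlgebra K M) c) • ε := by
  induction a using MonoidAlgebra.induction_linear with
  | zero => exact ⟨0, by simp⟩
  | add f g hf hg =>
    obtain ⟨c, hc⟩ := hf
    obtain ⟨d, hd⟩ := hg
    exact ⟨c + d, by simp only [map_add, op_add, add_smul, hc, hd]⟩
  | single y c =>
    rw [single_eq_algebraMap_mul_of, Algebra.commutes, op_mul, mul_smul, hact y]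
    split_ifs
    · exact ⟨c, rfl⟩
    · exact ⟨0, by simp⟩

theorem JTrivial.exists_isSx_of_isSimpleModule (hJ : JTrivial M) [Finite M]
    [IsSimpleModule (MonoidAlgebra K M)ᵐᵒᵖ N] : ∃ x : M, IsSx K x N := by
  have := IsSimpleModule.nontrivial (MonoidAlgebra K M)ᵐᵒᵖ N
  obtain ⟨w, hw⟩ := exists_ne (0 : N)
  obtain ⟨x, ⟨v, hv⟩, hmin⟩ :=
    hJ.exists_leJ_minimal (P := fun y => ∃ v : N, op (of K M y) • v ≠ 0)
      ⟨1, w, by rwa [map_one, op_one, one_smul]⟩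
  have hact (y : M) :
      op (of K M y) • op (of K M x) • v = if x * y = x then op (of K M x) • v else 0 := by
    rw [← mul_smul, ← op_mul, ← map_mul]
    split_ifs with hy
    · rw [hy]
    · by_contra hne
      exact hy (hmin (x * y) ⟨v, hne⟩ ⟨1, y, by simp⟩)
  refine ⟨x, _, hv, fun u => ?_, hact⟩
  obtain ⟨r, rfl⟩ := IsSimpleModule.toSpanSingleton_surjective (MonoidAlgebra K M)ᵐᵒᵖ hv u
  obtain ⟨c, hc⟩ := exists_smul_eq_algebraMap_smul hact r.unop
  exact ⟨c, by rw [LinearMap.toSpanSingleton_apply, ← hc, op_unop]⟩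

end RightModules

/-- Let `K` be a field and `M` a finite `J`-trivial monoid.  For each `x ∈ M` there is a
(one-dimensional) right `K[M]`-module `S_x` with basis vector `ε_x` and action
`ε_x · y = ε_x` if `x * y = x` and `0` otherwise; moreover every simple right `K[M]`-module
is isomorphic to some `S_x` (hence one-dimensional over `K`). -/
theorem simple_modules_of_JTrivial (K : Type u) [Field K] {M : Type u} [Monoid M]
    [Fintype M] (hJ : JTrivial M) :
    (∀ x : M, ∃ (N : Type u) (iN : AddCommGroup N)
      (_ : @Module (MonoidAlgebra K M)ᵐᵒᵖ N _ iN.toAddCommMonoid), IsSx K x N) ∧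
    (∀ (N : Type u) [AddCommGroup N] [Module (MonoidAlgebra K M)ᵐᵒᵖ N],
      IsSimpleModule (MonoidAlgebra K M)ᵐᵒᵖ N → ∃ x : M, IsSx K x N) :=
  ⟨fun x => ⟨K, inferInstance, charModule (hJ.stabilizerChar K x),
      hJ.isSx_charModule_stabilizerChar x⟩,
    fun _ _ _ _ => hJ.exists_isSx_of_isSimpleModule⟩
end

section
/- Let M be a finite J-trivial monoid, e ∈ M an idempotent, and y ∈ M. Then the following three statements are equivalent: (1) e ≤_J y; (2) e·y = e; (3) y·e = e. -/
/-!
If `e = u * y * v` with `e` idempotent, then `e = e * u * y * v`, so `e` lies `J`-below `e * u * y`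
and `e * u`, which lie `J`-below `e`. `J`-triviality collapses these chains to equalities,
giving `e * u = e * u * y = e` and hence `e * y = e`; the dual chain gives `y * e = e`.
-/

theorem leJ_mul_right {M : Type*} [Monoid M] (x a : M) : leJ (x * a) x :=
  ⟨1, a, by rw [one_mul]⟩

theorem leJ_mul_left {M : Type*} [Monoid M] (a x : M) : leJ (a * x) x :=
  ⟨a, 1, by rw [mul_one]⟩

namespace JTrivial

variable {M : Type*} [Monoid M]

theorem leJ_antisymm_s4 (hJ : JTrivial M) {x y : M} (hxy : leJ x y) (hyx : leJ y x) : x = y := by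
  obtain ⟨a, b, hx⟩ := hxy
  obtain ⟨c, d, hy⟩ := hyx
  refine hJ x y (Set.ext fun z => ⟨?_, ?_⟩)
  · rintro ⟨u, v, rfl⟩
    exact ⟨u * a, b * v, by rw [hx]; simp only [mul_assoc]⟩
  · rintro ⟨u, v, rfl⟩
    exact ⟨u * c, d * v, by rw [hy]; simp only [mul_assoc]⟩

theorem mul_eq_self_of_mul_mul_eq_self_right (hJ : JTrivial M) {x a b : M}
    (h : x * a * b = x) : x * a = x :=
  hJ.leJ_antisymm_s4 (leJ_mul_right x a) ⟨1, b, by rw [one_mul, h]⟩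

theorem mul_eq_self_of_mul_mul_eq_self_left (hJ : JTrivial M) {x a b : M}
    (h : b * a * x = x) : a * x = x :=
  hJ.leJ_antisymm_s4 (leJ_mul_left a x) ⟨b, 1, by rw [mul_one, ← mul_assoc, h]⟩

theorem mul_right_eq_self_of_leJ (hJ : JTrivial M) {e y : M} (he : IsIdempotentElem e)
    (hle : leJ e y) : e * y = e := by
  obtain ⟨u, v, huv⟩ := hle
  have heuyv : e * (u * y) * v = e := by
    calc e * (u * y) * v = e * (u * y * v) := by simp only [mul_assoc]
      _ = e := by rw [← huv, he.eq]
  have heuy : e * u * y = e := by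
    rw [mul_assoc]; exact hJ.mul_eq_self_of_mul_mul_eq_self_right heuyv
  have heu : e * u = e := hJ.mul_eq_self_of_mul_mul_eq_self_right heuy
  rwa [heu] at heuy

theorem mul_left_eq_self_of_leJ (hJ : JTrivial M) {e y : M} (he : IsIdempotentElem e)
    (hle : leJ e y) : y * e = e := by
  obtain ⟨u, v, huv⟩ := hle
  have huyve : u * (y * v) * e = e := by
    calc u * (y * v) * e = (u * y * v) * e := by simp only [mul_assoc]
      _ = e := by rw [← huv, he.eq]
  have hyve : y * v * e = e := hJ.mul_eq_self_of_mul_mul_eq_self_left huyve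
  have hve : v * e = e := hJ.mul_eq_self_of_mul_mul_eq_self_left hyve
  rwa [mul_assoc, hve] at hyve

end JTrivial

theorem idempotent_leJ_iff_general {M : Type*} [Monoid M] (hJ : JTrivial M)
    (e y : M) (he : IsIdempotentElem e) :
    (leJ e y ↔ e * y = e) ∧ (leJ e y ↔ y * e = e) :=
  ⟨⟨hJ.mul_right_eq_self_of_leJ he, fun h => h ▸ leJ_mul_left e y⟩,
    ⟨hJ.mul_left_eq_self_of_leJ he, fun h => h ▸ leJ_mul_right y e⟩⟩

/-- For an idempotent `e` in a finite `J`-trivial monoid and any `y`, the conditions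
`e ≤_J y`, `e * y = e` and `y * e = e` are equivalent. -/
theorem idempotent_leJ_iff {M : Type*} [Monoid M] [Fintype M] (hJ : JTrivial M)
    (e y : M) (he : IsIdempotentElem e) :
    (leJ e y ↔ e * y = e) ∧ (leJ e y ↔ y * e = e) :=
  idempotent_leJ_iff_general hJ e y he
end

section
/- Let K be a field, A a finite-dimensional K-algebra, and x ∈ A such that x² − x lies in the Jacobson radical of A. Then there exists a polynomial P ∈ ℤ[X] with zero constant term such that y := P(x) (evaluated in A, with integer coefficients acting through the canonical ring map ℤ → A) satisfies y² = y and y − x lies in the Jacobson radical of A. Moreover, P can be chosen depending only on the dimension of A over K (and not on x or A). -/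
/-!
Iterate `f(t) = 3t² - 2t³` starting from `t = x`. Since `f(t) - t = (t² - t)(1 - 2t)` and
`f(t)² - f(t) = (t² - t)² (4t² - 4t - 3)`, each step stays congruent to `x` modulo `x² - x` while
squaring the defect `t² - t`; after `k` steps the defect is a multiple of `(x² - x)^(2^k)`.
In an `n`-dimensional algebra the radical is nilpotent and left multiplication by a radical
element is a nilpotent endomorphism of an `n`-dimensional space, so `(x² - x)^n = 0` and
`k = n` steps give an idempotent.
-/

open Polynomial Module

theorem IsNilpotent.pow_finrank_eq_zero {K A : Type*} [Field K] [Ring A] [Algebra K A]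
    [FiniteDimensional K A] {a : A} (ha : IsNilpotent a) : a ^ finrank K A = 0 := by
  have hmul : IsNilpotent (Algebra.lmul K A a) := ha.map (Algebra.lmul K A)
  have hpow := (Algebra.lmul K A a).aeval_self_charpoly
  rw [hmul.charpoly_eq_X_pow_finrank, map_pow, aeval_X, ← map_pow] at hpow
  simpa using congr($(hpow) 1)

theorem pow_finrank_eq_zero_of_mem_jacobson {K A : Type*} [Field K] [Ring A] [Algebra K A]
    [FiniteDimensional K A] {a : A} (ha : a ∈ Ideal.jacobson (⊥ : Ideal A)) :
    a ^ finrank K A = 0 := by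
  have : IsArtinianRing A := .of_finite K A
  obtain ⟨k, hk⟩ := IsArtinianRing.isNilpotent_jacobson_bot (R := A)
  refine IsNilpotent.pow_finrank_eq_zero ⟨k, ?_⟩
  simpa [hk] using Ideal.pow_mem_pow ha k

noncomputable def idempotentLift : ℕ → ℤ[X]
  | 0 => X
  | k + 1 => 3 * idempotentLift k ^ 2 - 2 * idempotentLift k ^ 3

theorem idempotentLift_coeff_zero (k : ℕ) : (idempotentLift k).coeff 0 = 0 := by
  rw [coeff_zero_eq_eval_zero]
  induction k with
  | zero => simp [idempotentLift]
  | succ k ih => simp [idempotentLift, ih]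

theorem X_sq_sub_X_dvd_idempotentLift_sub_X (k : ℕ) :
    (X ^ 2 - X : ℤ[X]) ∣ idempotentLift k - X := by
  induction k with
  | zero => simp [idempotentLift]
  | succ k ih =>
    set p := idempotentLift k
    have hsq : (X ^ 2 - X : ℤ[X]) ∣ p ^ 2 - p := by
      rw [show p ^ 2 - p = (p - X) * (p + X - 1) + (X ^ 2 - X) by ring]
      exact dvd_add (ih.mul_right _) dvd_rfl
    have hsucc : idempotentLift (k + 1) - X = (p ^ 2 - p) * (1 - 2 * p) + (p - X) := by
      simp only [idempotentLift, p]; ring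
    rw [hsucc]
    exact dvd_add (hsq.mul_right _) ih

theorem X_sq_sub_X_pow_dvd_idempotentLift_sq_sub (k : ℕ) :
    (X ^ 2 - X : ℤ[X]) ^ 2 ^ k ∣ idempotentLift k ^ 2 - idempotentLift k := by
  induction k with
  | zero => simp [idempotentLift]
  | succ k ih =>
    set p := idempotentLift k
    have hsucc : idempotentLift (k + 1) ^ 2 - idempotentLift (k + 1)
        = (p ^ 2 - p) ^ 2 * (4 * p ^ 2 - 4 * p - 3) := by
      simp only [idempotentLift, p]; ring
    rw [hsucc, pow_succ 2 k, pow_mul]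
    exact (pow_dvd_pow_of_dvd ih 2).mul_right _

theorem isIdempotentElem_aeval_idempotentLift {A : Type*} [Ring A] {x : A} {k : ℕ}
    (hx : (x ^ 2 - x) ^ 2 ^ k = 0) : IsIdempotentElem (aeval x (idempotentLift k)) := by
  obtain ⟨q, hq⟩ := X_sq_sub_X_pow_dvd_idempotentLift_sq_sub k
  have := congrArg (aeval x) hq
  simp only [map_sub, map_mul, map_pow, aeval_X, hx, zero_mul, sub_eq_zero] at this
  rw [IsIdempotentElem, ← sq, this]

theorem aeval_idempotentLift_sub_mem {A : Type*} [Ring A] {I : Ideal A} {x : A}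
    (hx : x ^ 2 - x ∈ I) (k : ℕ) : aeval x (idempotentLift k) - x ∈ I := by
  obtain ⟨q, hq⟩ := X_sq_sub_X_dvd_idempotentLift_sub_X k
  rw [mul_comm] at hq
  have := congrArg (aeval x) hq
  simp only [map_sub, map_mul, map_pow, aeval_X] at this
  rw [this]
  exact I.mul_mem_left _ hx

/-- Let `K` be a field.  For every `n` there is a polynomial `P ∈ ℤ[X]` with zero constant
term (depending only on `n`) such that, for every finite-dimensional `K`-algebra `A` of
dimension `n` and every `x ∈ A` whose image in `A/rad A` is idempotent (i.e. `x² - x ∈ rad A`),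
the element `y = P(x)` is idempotent and has the same image as `x` modulo the radical. -/
theorem exists_idempotent_lifting_polynomial (K : Type*) [Field K] (n : ℕ) :
    ∃ P : Polynomial ℤ, P.coeff 0 = 0 ∧
      ∀ (A : Type*) [Ring A] [Algebra K A] [FiniteDimensional K A],
        Module.finrank K A = n →
        ∀ x : A, x ^ 2 - x ∈ Ideal.jacobson (⊥ : Ideal A) →
          IsIdempotentElem (Polynomial.aeval x P) ∧
          Polynomial.aeval x P - x ∈ Ideal.jacobson (⊥ : Ideal A) := by
  refine ⟨idempotentLift n, idempotentLift_coeff_zero n, fun A _ _ _ hA x hx => ?_⟩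
  refine ⟨isIdempotentElem_aeval_idempotentLift ?_, aeval_idempotentLift_sub_mem hx n⟩
  have hnil : (x ^ 2 - x) ^ n = 0 := hA ▸ pow_finrank_eq_zero_of_mem_jacobson (K := K) hx
  exact pow_eq_zero_of_le Nat.lt_two_pow_self.le hnil
end
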